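/- arXiv:1711.08816 — 3 statements merged into one kernel-verified Lean document; each statement's English description precedes it below -/
import Mathlib

section
/- Let M be a loopless matroid on a linearly ordered ground set E. A subset I of E is an nbc-set (contains no broken circuit) if and only if for every element x of I, x is the minimum element of the closure of the set {y ∈ I : y ≥ x}. -/
/-! The least element `m` of a circuit `C` lies in the closure of the broken circuit `C \ {m}`;
conversely, an element `z` of the closure of `S` outside `S` lies in a circuit contained in
`insert z S`, whose least element is `z` when `z` is below all of `S`. Hence some `z < x` in the
closure of `{y ∈ I : x ≤ y}` yields a broken circuit inside `I`, and a broken circuit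
`C \ {m} ⊆ I` (nonempty, as there are no loops) with least element `x` puts `m < x` in that
closure. -/

open scoped Classical

/-- A circuit of a matroid: a minimal dependent set. -/
def Matroid.IsCircuitF {α : Type*} (M : Matroid α) (C : Finset α) : Prop :=
  M.Dep ↑C ∧ ∀ D ⊂ C, M.Indep ↑D

/-- A broken circuit: a circuit with its minimum element removed. -/
def Matroid.BrokenCircuit {α : Type*} [LinearOrder α] (M : Matroid α) (B : Finset α) : Prop :=
  ∃ C : Finset α, M.IsCircuitF C ∧ ∃ h : C.Nonempty, B = C.erase (C.min' h)

/-- An nbc-set: a set containing no broken circuit. -/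
def Matroid.NbcSet {α : Type*} [LinearOrder α] (M : Matroid α) (I : Finset α) : Prop :=
  ∀ B : Finset α, M.BrokenCircuit B → ¬ B ⊆ I

/-- The rank of a set in a matroid: the largest size of an independent subset. -/
noncomputable def Matroid.mrk {α : Type*} (M : Matroid α) (X : Set α) : ℕ :=
  sSup {n | ∃ I : Finset α, M.Indep ↑I ∧ ↑I ⊆ X ∧ I.card = n}

namespace Matroid

variable {α : Type*} {M : Matroid α}

lemma isCircuitF_iff_isCircuit {C : Finset α} : M.IsCircuitF C ↔ M.IsCircuit ↑C := by
  rw [isCircuit_iff_forall_ssubset, IsCircuitF]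
  refine and_congr_right fun _ ↦ ⟨fun h D hD ↦ ?_, fun h D hD ↦ h (by exact_mod_cast hD)⟩
  lift D to Finset α using C.finite_toSet.subset hD.subset
  exact h D (by exact_mod_cast hD)

variable [LinearOrder α]

lemma BrokenCircuit.exists_lt_mem_closure {B : Finset α} (hB : M.BrokenCircuit B) :
    ∃ z ∈ M.closure ↑B, ∀ y ∈ B, z < y := by
  obtain ⟨C, hC, hne, rfl⟩ := hB
  refine ⟨C.min' hne, ?_, fun y hy ↦ C.min'_lt_of_mem_erase_min' hne hy⟩
  simpa using (isCircuitF_iff_isCircuit.1 hC).mem_closure_sdiff_singleton_of_mem (C.min'_mem hne)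

lemma exists_brokenCircuit_subset_of_mem_closure {S : Set α} (hS : S.Finite) {z : α}
    (hz : z ∈ M.closure S) (hlt : ∀ y ∈ S, z < y) : ∃ B, M.BrokenCircuit B ∧ ↑B ⊆ S := by
  obtain ⟨C, hCS, hC, hzC⟩ := exists_isCircuit_of_mem_closure hz fun h ↦ (hlt z h).false
  lift C to Finset α using (hS.insert z).subset hCS
  have hne : C.Nonempty := ⟨z, hzC⟩
  have hmin : C.min' hne = z := by
    refine le_antisymm (C.min'_le z hzC) (C.le_min' hne z fun y hy ↦ ?_)
    obtain rfl | hyS := hCS hy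
    exacts [le_rfl, (hlt y hyS).le]
  refine ⟨C.erase z, ⟨C, isCircuitF_iff_isCircuit.2 hC, hne, by rw [hmin]⟩, fun y hy ↦ ?_⟩
  rw [Finset.coe_erase] at hy
  exact (hCS hy.1).resolve_left hy.2

end Matroid

theorem stmt_0_general {α : Type*} [LinearOrder α] (M : Matroid α)
    (hLoopless : ∀ e : α, M.Indep {e}) (I : Finset α) :
    M.NbcSet I ↔ ∀ x ∈ I, IsLeast (M.closure {y | y ∈ I ∧ x ≤ y}) x := by
  have hnonloop (e : α) : M.IsNonloop e := Matroid.indep_singleton.1 (hLoopless e)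
  constructor
  · intro hnbc x hx
    refine ⟨M.mem_closure_of_mem' (show x ∈ {y | y ∈ I ∧ x ≤ y} from ⟨hx, le_rfl⟩)
      (hnonloop x).mem_ground, fun z hz ↦ not_lt.1 fun hzx ↦ ?_⟩
    obtain ⟨B, hB, hBS⟩ := M.exists_brokenCircuit_subset_of_mem_closure
      (I.finite_toSet.subset fun _ h ↦ h.1) hz fun y hy ↦ hzx.trans_le hy.2
    exact hnbc B hB fun y hy ↦ (hBS hy).1
  · intro hleast B hB hBI
    obtain ⟨z, hz, hlt⟩ := hB.exists_lt_mem_closure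
    have hne : B.Nonempty := by
      refine Finset.nonempty_iff_ne_empty.2 fun hB ↦ (hnonloop z).not_isLoop ?_
      rwa [hB, Finset.coe_empty] at hz
    have hBS : ↑B ⊆ {y | y ∈ I ∧ B.min' hne ≤ y} := fun y hy ↦ ⟨hBI hy, B.min'_le y hy⟩
    have hmin := B.min'_mem hne
    exact (hlt _ hmin).not_ge ((hleast _ (hBI hmin)).2 (M.closure_subset_closure hBS hz))

/-- A subset `I` is an nbc-set iff every `x ∈ I` is the minimum element of the
closure of `{y ∈ I : y ≥ x}`. -/
theorem stmt_0 {α : Type*} [Fintype α] [LinearOrder α] (M : Matroid α)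
    (hE : M.E = Set.univ) (hLoopless : ∀ e : α, M.Indep {e}) (I : Finset α) :
    M.NbcSet I ↔ ∀ x ∈ I, IsLeast (M.closure {y | y ∈ I ∧ x ≤ y}) x :=
  stmt_0_general M hLoopless I
end

section
/- A subset T of the ground set of a simple matroid M is independent if and only if the image ω_T of the exterior monomial e_T in the Orlik–Solomon algebra A(M) is nonzero. -/
/-!
If `T` contains a circuit `C`, then `e_C = e_c ∧ ∂e_C` for any `c ∈ C`, so `e_C`, and with it
`e_T = ±e_C ∧ e_{T \ C}`, lies in `I(M)`.

Conversely, let `T` be independent and colour each `a` by the least `x` with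
`a ∈ cl (T ∩ Iic x)`. On `T` this colouring is the identity, and its sublevel sets are flats,
which in a loopless matroid forces every circuit to contain two elements of the same colour.
Since `∂` is contraction with the functional taking the value `1` on every basis vector, the
relabelling `e_a ↦ e_{colour a}` sends each `∂e_C` to the contraction of a monomial with a
repeated factor, that is to `0`. It therefore descends to `A(M)`, where it sends `ω_T` to the
nonzero monomial `e_T`.
-/

open scoped Classical

/-- The exterior monomial indexed by a list of ground-set elements. -/
noncomputable def eMon {α : Type*} [DecidableEq α] (K : Type*) [Field K] (l : List α) :
    ExteriorAlgebra K (α → K) :=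
  (l.map fun i => ExteriorAlgebra.ι K (Pi.single i (1 : K))).prod

/-- The exterior monomial of a finite set, taken in increasing order. -/
noncomputable def eFin {α : Type*} [LinearOrder α] (K : Type*) [Field K] (S : Finset α) :
    ExteriorAlgebra K (α → K) :=
  eMon K (S.sort (· ≤ ·))

/-- The boundary `∂ e_S` of the exterior monomial of a finite set. -/
noncomputable def bdMon {α : Type*} [LinearOrder α] (K : Type*) [Field K] (S : Finset α) :
    ExteriorAlgebra K (α → K) :=
  ∑ j ∈ Finset.range S.card, (-1 : K) ^ j • eMon K ((S.sort (· ≤ ·)).eraseIdx j)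

/-- The Orlik–Solomon relations: each `∂ e_C`, for a circuit `C`, is set to zero. -/
def OSRel {α : Type*} [LinearOrder α] (K : Type*) [Field K] (M : Matroid α)
    (x y : ExteriorAlgebra K (α → K)) : Prop :=
  (∃ C : Finset α, M.IsCircuitF C ∧ x = bdMon K C) ∧ y = 0

/-- The Orlik–Solomon algebra `A(M) = Λ(k^E)/I(M)`. -/
abbrev OSAlg {α : Type*} [LinearOrder α] (K : Type*) [Field K] (M : Matroid α) :=
  RingQuot (OSRel K M)

/-- `ω_T`, the image of `e_T` in the Orlik–Solomon algebra. -/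
noncomputable def omegaT {α : Type*} [LinearOrder α] (K : Type*) [Field K] (M : Matroid α)
    (T : Finset α) : OSAlg K M :=
  RingQuot.mkAlgHom K (OSRel K M) (eFin K T)

section ExteriorMonomial

variable {ι : Type*} [DecidableEq ι] (K : Type*) [Field K]

@[simp] lemma eMon_nil : eMon K ([] : List ι) = 1 := rfl

@[simp] lemma eMon_cons (i : ι) (l : List ι) :
    eMon K (i :: l) = ExteriorAlgebra.ι K (Pi.single i 1) * eMon K l := by
  simp [eMon]

lemma eMon_append (l₁ l₂ : List ι) : eMon K (l₁ ++ l₂) = eMon K l₁ * eMon K l₂ := by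
  simp [eMon]

lemma eMon_eq_or_eq_neg_of_perm {l₁ l₂ : List ι} (h : l₁.Perm l₂) :
    eMon K l₁ = eMon K l₂ ∨ eMon K l₁ = -eMon K l₂ := by
  induction h with
  | nil => exact Or.inl rfl
  | cons i _ ih => rcases ih with ih | ih <;> simp [ih]
  | swap i j l =>
    have hanti :=
      ExteriorAlgebra.ι_add_mul_swap (R := K) (Pi.single j 1 : ι → K) (Pi.single i 1)
    refine Or.inr ?_
    simp only [eMon_cons, ← mul_assoc, ← neg_mul, eq_neg_of_add_eq_zero_left hanti]
  | trans _ _ ih₁ ih₂ =>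
    rcases ih₁ with h₁ | h₁ <;> rcases ih₂ with h₂ | h₂ <;> simp [h₁, h₂]

lemma eMon_eq_zero_of_not_nodup {l : List ι} (h : ¬ l.Nodup) : eMon K l = 0 := by
  obtain ⟨i, hi⟩ : ∃ i, [i, i].Sublist l := by simpa [List.nodup_iff_sublist] using h
  obtain ⟨r, hr⟩ := hi.exists_perm_append
  have hii : eMon K ([i, i] ++ r) = 0 := by
    rw [eMon_append, eMon_cons, eMon_cons, eMon_nil, mul_one, ExteriorAlgebra.ι_sq_zero, zero_mul]
  rcases eMon_eq_or_eq_neg_of_perm K hr with h' | h' <;> simp only [h', hii, neg_zero]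

lemma contractLeft_eMon_of_eq_one (d : Module.Dual K (ι → K)) {l : List ι}
    (hd : ∀ i ∈ l, d (Pi.single i 1) = 1) :
    CliffordAlgebra.contractLeft d (eMon K l) =
      ∑ j ∈ Finset.range l.length, (-1 : K) ^ j • eMon K (l.eraseIdx j) := by
  induction l with
  | nil => simp
  | cons i l ih =>
    rw [eMon_cons, CliffordAlgebra.contractLeft_ι_mul, hd i List.mem_cons_self,
      ih (fun j hj => hd j (List.mem_cons_of_mem _ hj)), one_smul, List.length_cons,
      Finset.sum_range_succ']
    simp only [List.eraseIdx_cons_succ, List.eraseIdx_cons_zero, pow_succ, pow_zero, one_smul,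
      eMon_cons, Finset.mul_sum, mul_smul_comm, mul_neg_one, neg_smul, Finset.sum_neg_distrib]
    abel

lemma contractLeft_eMon_of_eq_zero (d : Module.Dual K (ι → K)) {l : List ι}
    (hd : ∀ i ∈ l, d (Pi.single i 1) = 0) : CliffordAlgebra.contractLeft d (eMon K l) = 0 := by
  induction l with
  | nil => simp
  | cons i l ih =>
    rw [eMon_cons, CliffordAlgebra.contractLeft_ι_mul, hd i List.mem_cons_self,
      ih (fun j hj => hd j (List.mem_cons_of_mem _ hj)), zero_smul, mul_zero, sub_zero]

lemma eMon_ne_zero_of_nodup {l : List ι} (h : l.Nodup) : eMon K l ≠ 0 := by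
  induction l with
  | nil => simp
  | cons i l ih =>
    rw [List.nodup_cons] at h
    intro h0
    have hproj := congrArg (CliffordAlgebra.contractLeft (LinearMap.proj (R := K) i)) h0
    rw [eMon_cons, CliffordAlgebra.contractLeft_ι_mul, contractLeft_eMon_of_eq_zero,
      map_zero] at hproj
    · simp only [LinearMap.proj_apply, Pi.single_eq_same, one_smul, mul_zero, sub_zero] at hproj
      exact ih h.2 hproj
    · intro j hj
      simp [Pi.single_eq_of_ne (ne_of_mem_of_not_mem hj h.1).symm]

end ExteriorMonomial

section Boundary

variable {α : Type*} [LinearOrder α] (K : Type*) [Field K]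

lemma eFin_eq_or_eq_neg_of_subset {S T : Finset α} (h : S ⊆ T) :
    eFin K T = eFin K S * eFin K (T \ S) ∨ eFin K T = -(eFin K S * eFin K (T \ S)) := by
  have hperm : (T.sort (· ≤ ·)).Perm (S.sort (· ≤ ·) ++ (T \ S).sort (· ≤ ·)) := by
    rw [← Multiset.coe_eq_coe, ← Multiset.coe_add, Finset.sort_eq, Finset.sort_eq,
      Finset.sort_eq, ← Finset.disjUnion_val _ _ Finset.disjoint_sdiff,
      Finset.disjUnion_eq_union, Finset.union_sdiff_of_subset h]
  simpa only [eFin, eMon_append] using eMon_eq_or_eq_neg_of_perm K hperm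

lemma ι_mul_bdMon {S : Finset α} {a : α} (ha : a ∈ S) :
    ExteriorAlgebra.ι K (Pi.single a 1) * bdMon K S = eFin K S := by
  set d : Module.Dual K (α → K) := ∑ b ∈ S, LinearMap.proj b
  have hd : ∀ b ∈ S.sort (· ≤ ·), d (Pi.single b 1) = 1 := fun b hb => by
    simp [d, Finset.sum_pi_single', (Finset.mem_sort _).mp hb]
  have hbd : bdMon K S = CliffordAlgebra.contractLeft d (eFin K S) := by
    rw [eFin, contractLeft_eMon_of_eq_one K d hd, Finset.length_sort, bdMon]
  -- `e_a ∧ e_S = 0`, and contracting it with `d` gives `e_S - e_a ∧ ∂ e_S`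
  have hzero : ExteriorAlgebra.ι K (Pi.single a 1) * eFin K S = 0 := by
    rw [eFin, ← eMon_cons]
    exact eMon_eq_zero_of_not_nodup K fun h =>
      (List.nodup_cons.mp h).1 ((Finset.mem_sort _).mpr ha)
  have := congrArg (CliffordAlgebra.contractLeft d) hzero
  rw [CliffordAlgebra.contractLeft_ι_mul, hd a ((Finset.mem_sort _).mpr ha), one_smul,
    map_zero, sub_eq_zero, ← hbd] at this
  exact this.symm

end Boundary

section Relabel

variable {α β : Type*} [Fintype α] [DecidableEq α] [DecidableEq β] (K : Type*) [Field K]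

noncomputable def relabel (ℓ : α → β) :
    ExteriorAlgebra K (α → K) →ₐ[K] ExteriorAlgebra K (β → K) :=
  ExteriorAlgebra.map ((Pi.basisFun K α).constr K fun a => Pi.single (ℓ a) 1)

lemma relabel_eMon (ℓ : α → β) (l : List α) :
    relabel K ℓ (eMon K l) = eMon K (l.map ℓ) := by
  induction l with
  | nil => simp
  | cons a l ih =>
    rw [eMon_cons, map_mul, ih, relabel, ExteriorAlgebra.map_apply_ι, ← Pi.basisFun_apply,
      Module.Basis.constr_basis, List.map_cons, eMon_cons]

end Relabel

lemma relabel_bdMon_eq_zero {α β : Type*} [Fintype α] [LinearOrder α] [DecidableEq β]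
    (K : Type*) [Field K] {ℓ : α → β} {C : Finset α} (hC : ¬ Set.InjOn ℓ C) :
    relabel K ℓ (bdMon K C) = 0 := by
  set l := C.sort (· ≤ ·)
  set d : Module.Dual K (β → K) := ∑ b ∈ C.image ℓ, LinearMap.proj b
  have hd : ∀ b ∈ l.map ℓ, d (Pi.single b 1) = 1 := fun b hb => by
    obtain ⟨a, ha, rfl⟩ := List.mem_map.mp hb
    simp [d, Finset.sum_pi_single', Finset.mem_image_of_mem ℓ ((Finset.mem_sort _).mp ha)]
  have hdup : ¬ (l.map ℓ).Nodup := by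
    rw [List.nodup_map_iff_inj_on (Finset.sort_nodup _ _)]
    exact fun h => hC fun x hx y hy =>
      h x ((Finset.mem_sort _).mpr hx) y ((Finset.mem_sort _).mpr hy)
  calc relabel K ℓ (bdMon K C)
      = ∑ j ∈ Finset.range (l.map ℓ).length,
          (-1 : K) ^ j • eMon K ((l.map ℓ).eraseIdx j) := by
        simp only [bdMon, map_sum, map_smul, relabel_eMon, List.eraseIdx_map, List.length_map,
          Finset.length_sort, l]
    _ = CliffordAlgebra.contractLeft d (eMon K (l.map ℓ)) :=
        (contractLeft_eMon_of_eq_one K d hd).symm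
    _ = 0 := by rw [eMon_eq_zero_of_not_nodup K hdup, map_zero]

namespace Matroid

variable {α : Type*} {M : Matroid α}

lemma isCircuitF_iff {C : Finset α} : M.IsCircuitF C ↔ M.IsCircuit C := by
  rw [isCircuit_iff_forall_ssubset, IsCircuitF]
  refine and_congr_right fun _ =>
    ⟨fun h I hI => ?_, fun h D hD => h (Finset.coe_ssubset.mpr hD)⟩
  have hIfin : I.Finite := C.finite_toSet.subset hI.subset
  simpa using h hIfin.toFinset (by simpa using hI)

-- The top colour on a circuit is attained twice: otherwise the rest of the circuit lies in a
-- lower sublevel flat, which then contains the whole circuit.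
lemma IsCircuit.not_injOn_of_isFlat_sublevel [M.Loopless] {β : Type*} [LinearOrder β]
    {ℓ : α → β} (hℓ : ∀ z, M.IsFlat {a | ℓ a ≤ z}) {C : Set α} (hC : M.IsCircuit C)
    (hCfin : C.Finite) : ¬ Set.InjOn ℓ C := by
  intro hinj
  have hCnt : C.Nontrivial := loopless_iff_forall_isCircuit.mp ‹_› C hC
  obtain ⟨c, hcC, hcmax⟩ := Set.exists_max_image C ℓ hCfin hCnt.nonempty
  obtain ⟨c', hc'C, hc'max⟩ := Set.exists_max_image (C \ {c}) ℓ hCfin.sdiff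
    (Set.sdiff_nonempty.mpr hCnt.not_subset_singleton)
  have hsub : C \ {c} ⊆ {a | ℓ a ≤ ℓ c'} := hc'max
  have hcle : ℓ c ≤ ℓ c' := by
    simpa [(hℓ (ℓ c')).closure] using M.closure_subset_closure hsub
      (hC.mem_closure_sdiff_singleton_of_mem hcC)
  have hcc' : c = c' := hinj hcC hc'C.1 (le_antisymm hcle (hcmax c' hc'C.1))
  exact hc'C.2 hcc'.symm

section FlagColor

variable [Fintype α] [LinearOrder α]

noncomputable def flagColor (M : Matroid α) (T : Set α) (a : α) : WithTop α :=
  (Finset.univ.filter fun x => a ∈ M.closure (T ∩ Set.Iic x)).min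

lemma flagColor_le_coe_iff {T : Set α} {a z : α} :
    M.flagColor T a ≤ z ↔ a ∈ M.closure (T ∩ Set.Iic z) := by
  rw [flagColor, Finset.min, Finset.inf_le_iff (WithTop.coe_lt_top z)]
  simp only [Finset.mem_filter, Finset.mem_univ, true_and, WithTop.coe_le_coe]
  refine ⟨fun ⟨x, hx, hxz⟩ => ?_, fun h => ⟨z, h, le_rfl⟩⟩
  exact M.closure_subset_closure (Set.inter_subset_inter_right T (Set.Iic_subset_Iic.mpr hxz)) hx

lemma isFlat_setOf_flagColor_le (hE : M.E = Set.univ) (T : Set α) (w : WithTop α) :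
    M.IsFlat {a | M.flagColor T a ≤ w} := by
  induction w using WithTop.recTopCoe with
  | top => simpa only [le_top, Set.ofPred_true, ← hE] using M.ground_isFlat
  | coe z =>
    simp only [flagColor_le_coe_iff, Set.ofPred_mem_eq]
    exact M.isFlat_closure _

lemma Indep.flagColor_eq {T : Set α} (hT : M.Indep T) {b : α} (hb : b ∈ T) :
    M.flagColor T b = b := by
  refine le_antisymm (flagColor_le_coe_iff.mpr
    (M.subset_closure _ (Set.inter_subset_left.trans hT.subset_ground) ⟨hb, le_rfl⟩)) ?_
  induction h : M.flagColor T b using WithTop.recTopCoe with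
  | top => exact le_top
  | coe z =>
    refine WithTop.coe_le_coe.mpr (not_lt.mp fun hzb => hT.notMem_closure_sdiff_of_mem hb ?_)
    have hsub : T ∩ Set.Iic z ⊆ T \ {b} := fun x hx => ⟨hx.1, (hx.2.trans_lt hzb).ne⟩
    exact M.closure_subset_closure hsub (flagColor_le_coe_iff.mp h.le)

lemma Indep.injOn_flagColor {T : Set α} (hT : M.Indep T) : Set.InjOn (M.flagColor T) T :=
  fun x hx y hy hxy => WithTop.coe_injective <| by
    rwa [hT.flagColor_eq hx, hT.flagColor_eq hy] at hxy

end FlagColor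

end Matroid

section OrlikSolomon

variable {α : Type*} [LinearOrder α] (K : Type*) [Field K] {M : Matroid α}

lemma omegaT_eq_zero_of_isCircuitF {C : Finset α} (hC : M.IsCircuitF C) : omegaT K M C = 0 := by
  obtain ⟨a, ha⟩ : C.Nonempty := Finset.coe_nonempty.mp hC.1.nonempty
  have hbd : RingQuot.mkAlgHom K (OSRel K M) (bdMon K C) = 0 := by
    simpa using RingQuot.mkAlgHom_rel K (s := OSRel K M) ⟨⟨C, hC, rfl⟩, rfl⟩
  rw [omegaT, ← ι_mul_bdMon K ha, map_mul, hbd, mul_zero]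

lemma omegaT_eq_zero_of_subset {S T : Finset α} (h : S ⊆ T) (hS : omegaT K M S = 0) :
    omegaT K M T = 0 := by
  rw [omegaT] at hS ⊢
  rcases eFin_eq_or_eq_neg_of_subset K h with h' | h' <;> simp [h', hS]

lemma omegaT_eq_zero_of_dep [Finite α] {T : Finset α} (hT : M.Dep T) : omegaT K M T = 0 := by
  obtain ⟨C, hCT, hC⟩ := hT.exists_isCircuit_subset
  have hCfin : C.Finite := Set.toFinite C
  refine omegaT_eq_zero_of_subset K (S := hCfin.toFinset) (by simpa using hCT) ?_
  exact omegaT_eq_zero_of_isCircuitF K (Matroid.isCircuitF_iff.mpr (by simpa using hC))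

lemma omegaT_ne_zero_of_injOn [Fintype α] {β : Type*} [DecidableEq β] {ℓ : α → β}
    (hcirc : ∀ C, M.IsCircuitF C → ¬ Set.InjOn ℓ C) {T : Finset α} (hT : Set.InjOn ℓ T) :
    omegaT K M T ≠ 0 := by
  set L : OSAlg K M →ₐ[K] ExteriorAlgebra K (β → K) :=
    RingQuot.liftAlgHom K ⟨relabel K ℓ, by
      rintro _ _ ⟨⟨C, hC, rfl⟩, rfl⟩
      rw [relabel_bdMon_eq_zero K (hcirc C hC), map_zero]⟩
  have hL : L (omegaT K M T) = eMon K ((T.sort (· ≤ ·)).map ℓ) := by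
    rw [omegaT, RingQuot.liftAlgHom_mkAlgHom_apply, eFin, relabel_eMon]
  have hnodup : ((T.sort (· ≤ ·)).map ℓ).Nodup := by
    rw [List.nodup_map_iff_inj_on (Finset.sort_nodup _ _)]
    exact fun x hx y hy => hT ((Finset.mem_sort _).mp hx) ((Finset.mem_sort _).mp hy)
  intro h0
  rw [h0, map_zero] at hL
  exact eMon_ne_zero_of_nodup K hnodup hL.symm

end OrlikSolomon

/-- `T` is independent in a simple matroid iff `ω_T ≠ 0` in the Orlik–Solomon algebra. -/
theorem stmt_15 {α : Type*} [Fintype α] [LinearOrder α] (K : Type*) [Field K]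
    (M : Matroid α) (hE : M.E = Set.univ) (hSimple : ∀ i j : α, M.Indep {i, j})
    (T : Finset α) : M.Indep ↑T ↔ omegaT K M T ≠ 0 := by
  have : M.Loopless := Matroid.loopless_iff_forall_isNonloop.mpr fun a _ =>
    Matroid.indep_singleton.mp (by simpa using hSimple a a)
  refine ⟨fun hT => ?_, fun h => by_contra fun hT => h ?_⟩
  · refine omegaT_ne_zero_of_injOn K (fun C hC => ?_) hT.injOn_flagColor
    exact (Matroid.isCircuitF_iff.mp hC).not_injOn_of_isFlat_sublevel
      (Matroid.isFlat_setOf_flagColor_le hE T) C.finite_toSet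
  · exact omegaT_eq_zero_of_dep K (Matroid.dep_iff.mpr ⟨hT, hE ▸ Set.subset_univ _⟩)
end

section
/- For a rank-r matroid M on {1,…,n}, the rank sequence of a permutation π with respect to the dual matroid M* is obtained from the rank sequence of the reversed permutation π^rev (defined by π^rev(j) = π(n+1−j)) with respect to M by interchanging 0's and 1's. That is, r_j(π; M*) = 1 − r_{n+1−j}(π^rev; M) for all j. -/
open scoped Classical

/-- The rank sequence of a permutation `π` with respect to a matroid `M`:
`r_j = rk{π(1),…,π(j)} − rk{π(1),…,π(j−1)}` (indices zero-based). -/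
noncomputable def rankSeq {n : ℕ} (M : Matroid (Fin n)) (π : Equiv.Perm (Fin n))
    (j : Fin n) : ℤ :=
  (M.mrk {x | ∃ i ≤ j, π i = x} : ℤ) - (M.mrk {x | ∃ i < j, π i = x} : ℤ)

/-! The dual rank is `rk✶ X = |X| + rk Xᶜ − rk E`. Passing from the prefix
`{π(1),…,π(j−1)}` to `{π(1),…,π(j)}` raises `|X|` by one, while the complements are the
prefixes of lengths `n−j+1` and `n−j` of the reversed permutation, so `rk Xᶜ` drops by
exactly the `(n+1−j)`-th rank step of `π^rev`. -/

open Set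

namespace Matroid

variable {α : Type*} {M : Matroid α}

theorem mrk_eq_eRk [M.RankFinite] (X : Set α) : (M.mrk X : ℕ∞) = M.eRk X := by
  obtain ⟨I, hI⟩ := M.exists_isBasis' X
  have hIfin : I.Finite := hI.indep.finite
  have hmax : IsGreatest {n | ∃ J : Finset α, M.Indep ↑J ∧ ↑J ⊆ X ∧ J.card = n}
      hIfin.toFinset.card := by
    refine ⟨⟨hIfin.toFinset, by simpa using hI.indep, by simpa using hI.subset, rfl⟩, ?_⟩
    rintro _ ⟨J, hJ, hJX, rfl⟩
    have hle : (J : Set α).encard ≤ I.encard :=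
      (hJ.encard_le_eRk_of_subset hJX).trans_eq hI.eRk_eq_encard
    rwa [encard_coe_eq_coe_finsetCard, hIfin.encard_eq_coe_toFinset_card, Nat.cast_le] at hle
  rw [mrk, hmax.csSup_eq, hI.eRk_eq_encard, hIfin.encard_eq_coe_toFinset_card]

theorem mrk_dual_add_mrk_ground [M.Finite] {X : Set α} (hX : X ⊆ M.E) :
    M✶.mrk X + M.mrk M.E = M.mrk (M.E \ X) + X.ncard := by
  apply Nat.cast_injective (R := ℕ∞)
  push_cast
  rw [mrk_eq_eRk, mrk_eq_eRk, mrk_eq_eRk, eRk_ground, (M.ground_finite.subset hX).cast_ncard_eq]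
  exact M.eRk_dual_add_eRank X hX

end Matroid

theorem rankSeq_eq_mrk_image {n : ℕ} (M : Matroid (Fin n)) (π : Equiv.Perm (Fin n)) (j : Fin n) :
    rankSeq M π j = M.mrk (π '' Iic j) - M.mrk (π '' Iio j) :=
  rfl

theorem rankSeq_revPerm_trans_rev {n : ℕ} (M : Matroid (Fin n)) (π : Equiv.Perm (Fin n))
    (j : Fin n) :
    rankSeq M (Fin.revPerm.trans π) j.rev = M.mrk (π '' Iio j)ᶜ - M.mrk (π '' Iic j)ᶜ := by
  rw [rankSeq_eq_mrk_image, ← image_compl_eq π.bijective, ← image_compl_eq π.bijective,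
    compl_Iio, compl_Iic, Equiv.coe_trans, image_comp, image_comp]
  simp

theorem ncard_image_Iic {n : ℕ} {β : Type*} {f : Fin n → β} (hf : Function.Injective f)
    (j : Fin n) : (f '' Iic j).ncard = (f '' Iio j).ncard + 1 := by
  rw [← Iio_insert, image_insert_eq, ncard_insert_of_notMem (by simp [hf.eq_iff])]

/-- The rank sequence of `π` in the dual matroid `M✶` is obtained from the rank
sequence of the reversed permutation in `M` by interchanging `0`'s and `1`'s. -/
theorem stmt_18 {n : ℕ} (M : Matroid (Fin n)) (hE : M.E = Set.univ)
    (π : Equiv.Perm (Fin n)) (j : Fin n) :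
    rankSeq M✶ π j = 1 - rankSeq M (Fin.revPerm.trans π) j.rev := by
  have hdual (X : Set (Fin n)) : (M✶.mrk X : ℤ) = M.mrk Xᶜ + X.ncard - M.mrk univ := by
    have h := M.mrk_dual_add_mrk_ground (X := X) (by simp [hE])
    rw [hE, ← compl_eq_univ_sdiff] at h
    omega
  rw [rankSeq_eq_mrk_image, rankSeq_revPerm_trans_rev, hdual, hdual, ncard_image_Iic π.injective]
  push_cast
  ring
end
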